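/- arXiv:1901.00882 — 2 statements merged into one kernel-verified Lean document; each statement's English description precedes it below -/
import Mathlib

section
/- Let A, B be formal variables (elements of a commutative ℚ-algebra) and set D_{i,j} := -∑_{k=0}^{i}(-2)^{-(i+j-k+1)}C(i+j-k,j)B_k - ∑_{k=0}^{j}(-2)^{-(i+j-k+1)}C(i+j-k,i)A_k. Then the 'weighted lattice path' representation holds: D_{i,j} = ∑_{γ ∈ W(i,j)} (-2)^{-l(γ)} F(γ_end), where W(i,j) is the set of down/left lattice paths from (i,j) ending at a boundary site (first coordinate 0 or second coordinate 0), l(γ) is the number of steps, F(0,k) = (1/2)A_k, F(k,0) = (1/2)B_k for k ≥ 1 and F(0,0) = (1/2)(A_0 + B_0). -/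
/-!
The path sum `T i j` and the closed form `D i j` obey the same recursion:
`T (i+1) (j+1) = -½ (T i (j+1) + T (i+1) j)` inside the quadrant, and on the boundary
`T (i+1) 0 = F (i+1, 0) - ½ T i 0`, `T 0 (j+1) = F (0, j+1) - ½ T 0 j`, `T 0 0 = F (0, 0)`.
For the path sum this comes from splitting a path after its first step (a boundary path may also
stop at once); for the closed form it is Pascal's rule for the coefficient of `A k` and `B k`.
The recursion determines a function on `ℕ × ℕ`, so the two agree.
-/

/-- A single lattice step: down or to the left (source on the left of the relation). -/
def stepRel (a b : ℕ × ℕ) : Prop :=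
  (a.1 = b.1 + 1 ∧ a.2 = b.2) ∨ (a.1 = b.1 ∧ a.2 = b.2 + 1)

/-- `γ` is a down/left lattice path starting at `(i,j)` and ending at a boundary site
(first or second coordinate equal to `0`). -/
def IsPathW (i j : ℕ) (γ : List (ℕ × ℕ)) : Prop :=
  γ.Chain' stepRel ∧ γ.head? = some (i, j) ∧
    ∃ p : ℕ × ℕ, γ.getLast? = some p ∧ (p.1 = 0 ∨ p.2 = 0)

open Finset

lemma not_isPathW_nil (i j : ℕ) : ¬ IsPathW i j [] := by
  simp [IsPathW]

lemma isPathW_cons {i j : ℕ} {p : ℕ × ℕ} {γ : List (ℕ × ℕ)} :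
    IsPathW i j (p :: γ) ↔ p = (i, j) ∧
      (γ = [] ∧ (i = 0 ∨ j = 0) ∨ ∃ q, stepRel (i, j) q ∧ IsPathW q.1 q.2 γ) := by
  rcases γ with _ | ⟨q, γ⟩
  · simp only [IsPathW, List.Chain', List.isChain_singleton, List.head?_cons, Option.some.injEq,
      List.getLast?_singleton, exists_eq_left']
    aesop
  · simp only [IsPathW, List.Chain', List.isChain_cons_cons, List.head?_cons, Option.some.injEq,
      List.getLast?_cons_cons]
    aesop

def pathsW : ℕ → ℕ → Finset (List (ℕ × ℕ))
  | 0, 0 => {[(0, 0)]}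
  | i + 1, 0 => insert [(i + 1, 0)] ((pathsW i 0).image (List.cons (i + 1, 0)))
  | 0, j + 1 => insert [(0, j + 1)] ((pathsW 0 j).image (List.cons (0, j + 1)))
  | i + 1, j + 1 => (pathsW i (j + 1) ∪ pathsW (i + 1) j).image (List.cons (i + 1, j + 1))

lemma mem_pathsW {i j : ℕ} {γ : List (ℕ × ℕ)} : γ ∈ pathsW i j ↔ IsPathW i j γ := by
  induction i, j using pathsW.induct generalizing γ <;> rcases γ with _ | ⟨p, γ⟩ <;>
    simp_all [pathsW, not_isPathW_nil, isPathW_cons, stepRel, or_and_right, exists_or] <;> tauto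

lemma nil_notMem_pathsW (i j : ℕ) : [] ∉ pathsW i j :=
  fun h => not_isPathW_nil i j (mem_pathsW.1 h)

lemma disjoint_pathsW_of_ne {i j k l : ℕ} (h : (i, j) ≠ (k, l)) :
    Disjoint (pathsW i j) (pathsW k l) := by
  refine disjoint_left.2 fun γ h₁ h₂ => h ?_
  simpa using (mem_pathsW.1 h₁).2.1.symm.trans (mem_pathsW.1 h₂).2.1

lemma finsum_isPathW {M : Type*} [AddCommMonoid M] (f : List (ℕ × ℕ) → M) (i j : ℕ) :
    ∑ᶠ γ : {γ // IsPathW i j γ}, f γ.1 = ∑ γ ∈ pathsW i j, f γ := by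
  rw [finsum_subtype_eq_finsum_cond, ← finsum_mem_coe_finset]
  simp only [mem_coe, mem_pathsW]

/-- In `-D i j` the coefficient of `B k` is `latticeCoeff (i - k) j` and that of `A k` is
`latticeCoeff (j - k) i`. -/
def latticeCoeff (a b : ℕ) : ℚ := (-1 / 2 : ℚ) ^ (a + b + 1) * (a + b).choose b

lemma latticeCoeff_zero_zero : latticeCoeff 0 0 = -1 / 2 := by
  norm_num [latticeCoeff]

lemma latticeCoeff_succ_zero (a : ℕ) : latticeCoeff (a + 1) 0 = -1 / 2 * latticeCoeff a 0 := by
  simp only [latticeCoeff, add_zero, Nat.choose_zero_right, pow_succ]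
  ring

lemma latticeCoeff_zero_succ (b : ℕ) : latticeCoeff 0 (b + 1) = -1 / 2 * latticeCoeff 0 b := by
  simp only [latticeCoeff, zero_add, Nat.choose_self, pow_succ]
  ring

lemma latticeCoeff_succ_succ (a b : ℕ) :
    latticeCoeff (a + 1) (b + 1) = -1 / 2 * (latticeCoeff a (b + 1) + latticeCoeff (a + 1) b) := by
  simp only [latticeCoeff, show a + 1 + (b + 1) = a + b + 1 + 1 by omega,
    show a + (b + 1) = a + b + 1 by omega, show a + 1 + b = a + b + 1 by omega,
    Nat.choose_succ_succ', pow_succ]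
  push_cast
  ring

lemma neg_two_zpow_mul_choose_eq_latticeCoeff {i j k : ℕ} (hk : k ≤ i) :
    (-2 : ℚ) ^ (-((i : ℤ) + j - k + 1)) * ((i + j - k).choose j : ℚ) = latticeCoeff (i - k) j := by
  rw [latticeCoeff, show i + j - k = i - k + j by omega,
    show -((i : ℤ) + j - k + 1) = -((i - k + j + 1 : ℕ) : ℤ) by push_cast [hk]; ring,
    zpow_neg, zpow_natCast, ← inv_pow]
  norm_num

section

variable {V : Type*} [AddCommGroup V] [Module ℚ V]

def pathWeight (F : ℕ × ℕ → V) (γ : List (ℕ × ℕ)) : V :=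
  ((-2 : ℚ) ^ (-((γ.length : ℤ) - 1))) • F (γ.getLast?.getD (0, 0))

lemma pathWeight_singleton (F : ℕ × ℕ → V) (p : ℕ × ℕ) : pathWeight F [p] = F p := by
  simp [pathWeight]

lemma pathWeight_cons (F : ℕ × ℕ → V) (p : ℕ × ℕ) {γ : List (ℕ × ℕ)} (hγ : γ ≠ []) :
    pathWeight F (p :: γ) = (-1 / 2 : ℚ) • pathWeight F γ := by
  obtain ⟨q, γ, rfl⟩ := List.exists_cons_of_ne_nil hγ
  rw [pathWeight, pathWeight, List.getLast?_cons_cons, smul_smul, List.length_cons (a := p)]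
  congr 1
  generalize (q :: γ).length = n
  rw [Nat.cast_succ, show -((n : ℤ) + 1 - 1) = -1 + -((n : ℤ) - 1) by ring,
    zpow_add₀ (by norm_num)]
  norm_num

lemma sum_image_cons_pathWeight (F : ℕ × ℕ → V) (p : ℕ × ℕ) {s : Finset (List (ℕ × ℕ))}
    (hs : [] ∉ s) :
    ∑ γ ∈ s.image (List.cons p), pathWeight F γ = (-1 / 2 : ℚ) • ∑ γ ∈ s, pathWeight F γ := by
  rw [sum_image fun _ _ _ _ h => List.cons_injective h, smul_sum]
  exact sum_congr rfl fun γ hγ => pathWeight_cons F p (ne_of_mem_of_not_mem hγ hs)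

def totalWeight (F : ℕ × ℕ → V) (i j : ℕ) : V := ∑ γ ∈ pathsW i j, pathWeight F γ

lemma totalWeight_eq_of_recursion (F : ℕ × ℕ → V) (Y : ℕ → ℕ → V)
    (h00 : Y 0 0 = F (0, 0))
    (hi0 : ∀ i, Y (i + 1) 0 = F (i + 1, 0) + (-1 / 2 : ℚ) • Y i 0)
    (h0j : ∀ j, Y 0 (j + 1) = F (0, j + 1) + (-1 / 2 : ℚ) • Y 0 j)
    (hij : ∀ i j, Y (i + 1) (j + 1) = (-1 / 2 : ℚ) • (Y i (j + 1) + Y (i + 1) j)) (i j : ℕ) :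
    totalWeight F i j = Y i j := by
  have hcons : ∀ p k l, ([p] : List (ℕ × ℕ)) ∉ (pathsW k l).image (List.cons p) := by
    simp [nil_notMem_pathsW]
  induction i, j using pathsW.induct with
  | case1 => simp [totalWeight, pathsW, pathWeight_singleton, h00]
  | case2 i ih =>
    rw [totalWeight, pathsW, sum_insert (hcons _ _ _), pathWeight_singleton,
      sum_image_cons_pathWeight F _ (nil_notMem_pathsW _ _), ← totalWeight, ih, hi0]
  | case3 j ih =>
    rw [totalWeight, pathsW, sum_insert (hcons _ _ _), pathWeight_singleton,
      sum_image_cons_pathWeight F _ (nil_notMem_pathsW _ _), ← totalWeight, ih, h0j]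
  | case4 i j ih₁ ih₂ =>
    rw [totalWeight, pathsW, sum_image_cons_pathWeight F _ (by simp [nil_notMem_pathsW]),
      sum_union (disjoint_pathsW_of_ne (by simp)), ← totalWeight, ← totalWeight, ih₁, ih₂,
      hij]

def latticeSum (X : ℕ → V) (i j : ℕ) : V := ∑ k ∈ range (i + 1), latticeCoeff (i - k) j • X k

lemma latticeSum_zero_zero (X : ℕ → V) : latticeSum X 0 0 = (-1 / 2 : ℚ) • X 0 := by
  simp [latticeSum, latticeCoeff_zero_zero]

lemma latticeSum_zero_succ (X : ℕ → V) (j : ℕ) :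
    latticeSum X 0 (j + 1) = (-1 / 2 : ℚ) • latticeSum X 0 j := by
  simp [latticeSum, latticeCoeff_zero_succ, mul_smul]

lemma latticeSum_succ_zero (X : ℕ → V) (i : ℕ) :
    latticeSum X (i + 1) 0 = (-1 / 2 : ℚ) • (latticeSum X i 0 + X (i + 1)) := by
  rw [latticeSum, sum_range_succ, Nat.sub_self, latticeCoeff_zero_zero, latticeSum, smul_add,
    smul_sum]
  congr 1
  refine sum_congr rfl fun k hk => ?_
  rw [Nat.sub_add_comm (mem_range_succ_iff.1 hk), latticeCoeff_succ_zero, mul_smul]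

lemma latticeSum_succ_succ (X : ℕ → V) (i j : ℕ) :
    latticeSum X (i + 1) (j + 1) =
      (-1 / 2 : ℚ) • (latticeSum X i (j + 1) + latticeSum X (i + 1) j) := by
  rw [latticeSum, latticeSum, latticeSum, sum_range_succ, sum_range_succ _ (i + 1), Nat.sub_self,
    latticeCoeff_zero_succ, smul_add, smul_add, smul_sum, smul_sum, ← add_assoc, ← sum_add_distrib,
    mul_smul]
  congr 1
  refine sum_congr rfl fun k hk => ?_
  rw [Nat.sub_add_comm (mem_range_succ_iff.1 hk), latticeCoeff_succ_succ, mul_smul, add_smul,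
    smul_add]

lemma sum_neg_two_zpow_mul_choose_smul_eq_latticeSum (X : ℕ → V) (i j : ℕ) :
    ∑ k ∈ range (i + 1), ((-2 : ℚ) ^ (-((i : ℤ) + j - k + 1)) * ((i + j - k).choose j : ℚ)) • X k =
      latticeSum X i j :=
  sum_congr rfl fun k hk => by
    rw [neg_two_zpow_mul_choose_eq_latticeCoeff (mem_range_succ_iff.1 hk)]

end

/-- Weighted lattice-path representation: with
`D_{i,j} = -∑_{k=0}^{i} (-2)^{-(i+j-k+1)} C(i+j-k,j) B_k - ∑_{k=0}^{j} (-2)^{-(i+j-k+1)} C(i+j-k,i) A_k`,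
one has `D_{i,j} = ∑_{γ ∈ W(i,j)} (-2)^{-l(γ)} F(γ_end)` where `l(γ)` is the number of
steps of `γ`, `F(0,k) = (1/2)A_k`, `F(k,0) = (1/2)B_k` for `k ≥ 1`, and
`F(0,0) = (1/2)(A_0 + B_0)`. -/
theorem stmt_13 {V : Type*} [AddCommGroup V] [Module ℚ V]
    (A B : ℕ → V) (F : ℕ × ℕ → V)
    (hF0k : ∀ k, 1 ≤ k → F (0, k) = (1 / 2 : ℚ) • A k)
    (hFk0 : ∀ k, 1 ≤ k → F (k, 0) = (1 / 2 : ℚ) • B k)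
    (hF00 : F (0, 0) = (1 / 2 : ℚ) • (A 0 + B 0))
    (D : ℕ → ℕ → V)
    (hD : ∀ i j, D i j =
      - ∑ k ∈ Finset.range (i + 1),
          (((-2 : ℚ) ^ (-((i : ℤ) + j - k + 1)) * (Nat.choose (i + j - k) j : ℚ)) • B k)
      - ∑ k ∈ Finset.range (j + 1),
          (((-2 : ℚ) ^ (-((i : ℤ) + j - k + 1)) * (Nat.choose (i + j - k) i : ℚ)) • A k)) :
    ∀ i j, D i j =
      ∑ᶠ γ : {γ : List (ℕ × ℕ) // IsPathW i j γ},
        ((-2 : ℚ) ^ (-((γ.1.length : ℤ) - 1))) • F (γ.1.getLast?.getD (0, 0)) := by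
  have hD' : ∀ i j, D i j = -latticeSum B i j - latticeSum A j i := by
    intro i j
    rw [hD, sum_neg_two_zpow_mul_choose_smul_eq_latticeSum, add_comm (i : ℤ), add_comm i,
      sum_neg_two_zpow_mul_choose_smul_eq_latticeSum]
  intro i j
  change D i j = ∑ᶠ γ : {γ // IsPathW i j γ}, pathWeight F γ.1
  rw [finsum_isPathW, ← totalWeight, hD']
  refine (totalWeight_eq_of_recursion F (fun i j => -latticeSum B i j - latticeSum A j i)
    ?_ (fun i => ?_) (fun j => ?_) (fun i j => ?_) i j).symm
  · rw [latticeSum_zero_zero, latticeSum_zero_zero, hF00]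
    module
  · rw [latticeSum_succ_zero, latticeSum_zero_succ, hFk0 _ (Nat.le_add_left 1 i)]
    module
  · rw [latticeSum_succ_zero, latticeSum_zero_succ, hF0k _ (Nat.le_add_left 1 j)]
    module
  · rw [latticeSum_succ_succ, latticeSum_succ_succ]
    module
end

section
/- For nonnegative integers n₁, n₂, n₃ with even sum, ∫_ℝ ∏_{j=1}^{3} H_{n_j}(x/√(2t)) · G(t,x)³ dx = (2^{-(n₁+n₂+n₃)/2} / (3^{1/2} 4πt)) ∑_{r₁,r₂,r₃ : r₁+r₂+r₃ ≤ (n₁+n₂+n₃)/2} [∏_{j=1}^{3} (-1)^{r_j} 3^{r_j - n_j/2} n_j!/(r_j!(n_j - 2r_j)!)] · (∑_j (n_j - 2r_j))! / (∑_j (n_j/2 - r_j))!, for every t > 0. -/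
/-!
Substituting `y = x / √(2t)` turns `G(t,x)³ dx` into a constant multiple of `e^{-3y²/2} dy`.
Expanding each factor by the explicit formula
`H_n(y) = ∑_r (-1)^r n! / (2^r r! (n-2r)!) y^(n-2r)`, the integral becomes a triple sum of even
Gaussian moments `∫ y^(2k) e^(-b y²) dy = (2k-1)‼ (2b)^(-k) √(π/b)`, where `2k = ∑_j (n_j - 2 r_j)`.
What remains is bookkeeping of the powers of `2` and `3`, using `(2k)! = 2^k k! (2k-1)‼`.
-/

open MeasureTheory Real

/-- The 1d heat kernel, extended by zero for nonpositive times. -/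
noncomputable def heatK (t x : ℝ) : ℝ :=
  if 0 < t then (Real.sqrt (4 * Real.pi * t))⁻¹ * Real.exp (-x ^ 2 / (4 * t)) else 0

/-- Space-time convolution `(F * H)(t,x) = ∫∫ F(t-s, x-y) H(s,y) dy ds`. -/
noncomputable def stConv (F H : ℝ → ℝ → ℝ) : ℝ → ℝ → ℝ :=
  fun t x => ∫ p : ℝ × ℝ, F (t - p.1) (x - p.2) * H p.1 p.2

open Polynomial Finset
open scoped Nat

theorem Nat.factorial_two_mul_eq_mul_doubleFactorial (r : ℕ) :
    (2 * r)! = 2 ^ r * r ! * (2 * r - 1)‼ := by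
  cases r with
  | zero => rfl
  | succ r =>
    rw [show 2 * (r + 1) = 2 * r + 1 + 1 by ring, Nat.factorial_eq_mul_doubleFactorial,
      show 2 * r + 1 + 1 = 2 * (r + 1) by ring, Nat.doubleFactorial_two_mul,
      show 2 * (r + 1) - 1 = 2 * r + 1 by omega]

section Hermite

variable {K : Type*} [Field K] [CharZero K]

noncomputable def hermiteCoeff (n r : ℕ) : K :=
  (-1) ^ r * n ! / (2 ^ r * r ! * (n - 2 * r)!)

theorem Polynomial.cast_coeff_hermite_sub_two_mul {n r : ℕ} (h : 2 * r ≤ n) :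
    ((hermite n).coeff (n - 2 * r) : K) = hermiteCoeff n r := by
  obtain ⟨k, rfl⟩ : ∃ k, n = 2 * r + k := ⟨n - 2 * r, by omega⟩
  have hchoose := Nat.add_choose_mul_factorial_mul_factorial (2 * r) k
  rw [Nat.add_sub_cancel_left, coeff_hermite_explicit, hermiteCoeff, Nat.add_sub_cancel_left,
    ← hchoose, Nat.factorial_two_mul_eq_mul_doubleFactorial]
  push_cast
  rw [eq_div_iff (by simp [Nat.factorial_ne_zero])]
  ring

theorem Polynomial.aeval_hermite_eq_sum (n : ℕ) (y : K) :
    aeval y (hermite n) = ∑ r ∈ range (n / 2 + 1), hermiteCoeff n r * y ^ (n - 2 * r) := by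
  have hinj : Set.InjOn (fun r => n - 2 * r) (range (n / 2 + 1)) := by
    intro a ha b hb hab
    simp only [coe_range, Set.mem_Iio] at ha hb hab
    omega
  simp_rw [aeval_eq_sum_range, natDegree_hermite, zsmul_eq_mul]
  calc
    _ = ∑ i ∈ (range (n / 2 + 1)).image (n - 2 * ·), ((hermite n).coeff i : K) * y ^ i := by
      refine (sum_subset (fun i hi => ?_) fun i hi hi' => ?_).symm
      · simp only [mem_image, mem_range] at hi ⊢
        omega
      · simp only [mem_image, mem_range, not_exists, not_and] at hi hi'
        have := hi' ((n - i) / 2)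
        rw [coeff_hermite_of_odd_add (Nat.odd_iff.2 (by omega)), Int.cast_zero, zero_mul]
    _ = _ := by
      rw [sum_image hinj]
      refine sum_congr rfl fun r hr => ?_
      rw [cast_coeff_hermite_sub_two_mul (by simp only [mem_range] at hr; omega)]

end Hermite

theorem integrable_pow_mul_exp_neg_mul_sq {b : ℝ} (hb : 0 < b) (k : ℕ) :
    Integrable fun x : ℝ => x ^ k * exp (-b * x ^ 2) := by
  simpa [rpow_natCast] using
    integrable_rpow_mul_exp_neg_mul_sq hb (s := k) (by linarith [k.cast_nonneg (α := ℝ)])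

theorem integral_pow_two_mul_mul_exp_neg_mul_sq {b : ℝ} (hb : 0 < b) (k : ℕ) :
    ∫ x : ℝ, x ^ (2 * k) * exp (-b * x ^ 2) = (2 * k - 1)‼ / (2 * b) ^ k * √(π / b) := by
  have hsymm : ∫ x : ℝ, x ^ (2 * k) * exp (-b * x ^ 2)
      = 2 * ∫ x in Set.Ioi 0, x ^ ((2 * k : ℕ) : ℝ) * exp (-b * x ^ (2 : ℝ)) := by
    simp_rw [rpow_natCast, rpow_two, ← integral_comp_abs, pow_mul, sq_abs]
  have hexp : (((2 * k : ℕ) : ℝ) + 1) / 2 = k + 1 / 2 := by push_cast; ring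
  have hq : (-1 : ℝ) < (2 * k : ℕ) := by linarith [(2 * k).cast_nonneg (α := ℝ)]
  rw [hsymm, integral_rpow_mul_exp_neg_mul_rpow two_pos hq hb, neg_div, hexp, Gamma_nat_add_half, rpow_neg hb.le, rpow_add hb, rpow_natCast, ← sqrt_eq_rpow,
    sqrt_div' _ hb.le]
  field_simp
  ring

theorem integral_aeval_hermite_mul_aeval_hermite_mul_aeval_hermite_mul_exp_neg_mul_sq
    {b : ℝ} (hb : 0 < b) {n₁ n₂ n₃ M : ℕ} (hM : n₁ + n₂ + n₃ = 2 * M) :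
    ∫ y : ℝ, aeval y (hermite n₁) * aeval y (hermite n₂) * aeval y (hermite n₃) * exp (-b * y ^ 2)
      = ∑ r₁ ∈ range (n₁ / 2 + 1), ∑ r₂ ∈ range (n₂ / 2 + 1), ∑ r₃ ∈ range (n₃ / 2 + 1),
          hermiteCoeff n₁ r₁ * hermiteCoeff n₂ r₂ * hermiteCoeff n₃ r₃ *
            ((2 * (M - (r₁ + r₂ + r₃)) - 1)‼ / (2 * b) ^ (M - (r₁ + r₂ + r₃)) * √(π / b)) := by
  set S := range (n₁ / 2 + 1) ×ˢ range (n₂ / 2 + 1) ×ˢ range (n₃ / 2 + 1)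
  have hexpand (y : ℝ) :
      aeval y (hermite n₁) * aeval y (hermite n₂) * aeval y (hermite n₃) * exp (-b * y ^ 2)
        = ∑ r ∈ S, hermiteCoeff n₁ r.1 * hermiteCoeff n₂ r.2.1 * hermiteCoeff n₃ r.2.2 *
            (y ^ (2 * (M - (r.1 + r.2.1 + r.2.2))) * exp (-b * y ^ 2)) := by
    -- distributing the product puts `r₃` outermost, as `sum_product_right` does
    simp only [S, sum_product_right, aeval_hermite_eq_sum, sum_mul, mul_sum]
    refine sum_congr rfl fun r₃ hr₃ => sum_congr rfl fun r₂ hr₂ => sum_congr rfl fun r₁ hr₁ => ?_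
    simp only [mem_range] at hr₁ hr₂ hr₃
    rw [show 2 * (M - (r₁ + r₂ + r₃)) = (n₁ - 2 * r₁) + (n₂ - 2 * r₂) + (n₃ - 2 * r₃) by omega,
      pow_add, pow_add]
    ring
  simp_rw [hexpand]
  rw [integral_finsetSum _ fun r _ => (integrable_pow_mul_exp_neg_mul_sq hb _).const_mul _]
  simp only [S, sum_product, integral_const_mul, integral_pow_two_mul_mul_exp_neg_mul_sq hb]

theorem hermiteCoeff_mul_mul_doubleFactorial_div_three_pow {n₁ n₂ n₃ r₁ r₂ r₃ M : ℕ}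
    (hM : n₁ + n₂ + n₃ = 2 * M) (hR : r₁ + r₂ + r₃ ≤ M) :
    hermiteCoeff n₁ r₁ * hermiteCoeff n₂ r₂ * hermiteCoeff n₃ r₃ *
        ((2 * (M - (r₁ + r₂ + r₃)) - 1)‼ / (3 : ℝ) ^ (M - (r₁ + r₂ + r₃)))
      = (2 : ℝ) ^ (-((n₁ + n₂ + n₃ : ℕ) : ℝ) / 2) *
        ((-1 : ℝ) ^ r₁ * (3 : ℝ) ^ ((r₁ : ℝ) - n₁ / 2) * n₁ ! / (r₁ ! * (n₁ - 2 * r₁)!) *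
          ((-1 : ℝ) ^ r₂ * (3 : ℝ) ^ ((r₂ : ℝ) - n₂ / 2) * n₂ ! / (r₂ ! * (n₂ - 2 * r₂)!)) *
          ((-1 : ℝ) ^ r₃ * (3 : ℝ) ^ ((r₃ : ℝ) - n₃ / 2) * n₃ ! / (r₃ ! * (n₃ - 2 * r₃)!)) *
          (n₁ + n₂ + n₃ - 2 * (r₁ + r₂ + r₃))! / ((n₁ + n₂ + n₃) / 2 - (r₁ + r₂ + r₃))!) := by
  set k := M - (r₁ + r₂ + r₃)
  have hcoeff (n r : ℕ) : (-1 : ℝ) ^ r * (3 : ℝ) ^ ((r : ℝ) - n / 2) * n ! / (r ! * (n - 2 * r)!)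
      = hermiteCoeff n r * 2 ^ r * (3 : ℝ) ^ ((r : ℝ) - n / 2) := by
    rw [hermiteCoeff]
    field_simp
  have hNcast : ((n₁ + n₂ + n₃ : ℕ) : ℝ) = 2 * M := by exact_mod_cast hM
  have hkcast : (k : ℝ) = M - (r₁ + r₂ + r₃) := by push_cast [k, Nat.cast_sub hR]; ring
  have htwo : (2 : ℝ) ^ (-((n₁ + n₂ + n₃ : ℕ) : ℝ) / 2) = ((2 : ℝ) ^ M)⁻¹ := by
    rw [hNcast, show -(2 * (M : ℝ)) / 2 = -M by ring, rpow_neg zero_le_two, rpow_natCast]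
  have hthree : (3 : ℝ) ^ ((r₁ : ℝ) - n₁ / 2) * (3 : ℝ) ^ ((r₂ : ℝ) - n₂ / 2) *
      (3 : ℝ) ^ ((r₃ : ℝ) - n₃ / 2) * (3 : ℝ) ^ k = 1 := by
    rw [← rpow_natCast, ← rpow_add three_pos, ← rpow_add three_pos, ← rpow_add three_pos,
      ← rpow_zero 3]
    congr 1
    push_cast at hNcast
    linarith
  rw [show n₁ + n₂ + n₃ - 2 * (r₁ + r₂ + r₃) = 2 * k by omega,
    show (n₁ + n₂ + n₃) / 2 - (r₁ + r₂ + r₃) = k by omega, hcoeff, hcoeff, hcoeff,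
    Nat.factorial_two_mul_eq_mul_doubleFactorial]
  -- the three `rpow` factors enter only through their product `3⁻ᵏ`
  generalize (3 : ℝ) ^ ((r₁ : ℝ) - n₁ / 2) = a₁, (3 : ℝ) ^ ((r₂ : ℝ) - n₂ / 2) = a₂,
    (3 : ℝ) ^ ((r₃ : ℝ) - n₃ / 2) = a₃ at hthree ⊢
  rw [htwo, show M = r₁ + r₂ + r₃ + k by omega]
  field_simp
  push_cast
  linear_combination (-(hermiteCoeff n₁ r₁ * hermiteCoeff n₂ r₂ * hermiteCoeff n₃ r₃ *
    2 ^ (r₁ + r₂ + r₃ + k) * k ! * (2 * k - 1)‼ : ℝ)) * hthree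

theorem heatK_pow_three {t : ℝ} (ht : 0 < t) (x : ℝ) :
    heatK t x ^ 3 = (√(4 * π * t))⁻¹ ^ 3 * exp (-(3 / 2) * (x / √(2 * t)) ^ 2) := by
  rw [heatK, if_pos ht, mul_pow, ← exp_nat_mul, div_pow, sq_sqrt (by positivity)]
  congr 2
  field_simp
  ring

theorem integral_aeval_hermite_div_sqrt_mul_heatK_pow_three {n₁ n₂ n₃ : ℕ} {t : ℝ}
    (ht : 0 < t) :
    ∫ x : ℝ, aeval (x / √(2 * t)) (hermite n₁) * aeval (x / √(2 * t)) (hermite n₂) *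
        aeval (x / √(2 * t)) (hermite n₃) * heatK t x ^ 3
      = (√(4 * π * t))⁻¹ ^ 3 * √(2 * t) * ∫ y : ℝ, aeval y (hermite n₁) * aeval y (hermite n₂) *
          aeval y (hermite n₃) * exp (-(3 / 2) * y ^ 2) := by
  have hsubst := Measure.integral_comp_div (fun y : ℝ => aeval y (hermite n₁) *
    aeval y (hermite n₂) * aeval y (hermite n₃) * exp (-(3 / 2) * y ^ 2)) (√(2 * t))
  rw [abs_of_pos (sqrt_pos.2 (by positivity)), smul_eq_mul] at hsubst
  rw [mul_assoc, ← hsubst, ← integral_const_mul]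
  simp_rw [heatK_pow_three ht]
  congr with x
  ring

/-- Carlitz-type formula: for `n₁ + n₂ + n₃` even and `t > 0`,
`∫ ∏_j H_{n_j}(x/√(2t)) G(t,x)³ dx` equals the stated triple sum, where the sum
ranges over nonnegative `r_j` with `2 r_j ≤ n_j`. -/
theorem stmt_17 (n₁ n₂ n₃ : ℕ) (h : Even (n₁ + n₂ + n₃)) (t : ℝ) (ht : 0 < t) :
    ∫ x : ℝ,
        (Polynomial.aeval (x / Real.sqrt (2 * t)) (Polynomial.hermite n₁)) *
        (Polynomial.aeval (x / Real.sqrt (2 * t)) (Polynomial.hermite n₂)) *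
        (Polynomial.aeval (x / Real.sqrt (2 * t)) (Polynomial.hermite n₃)) *
        (heatK t x) ^ 3
      = (2 : ℝ) ^ (-((n₁ + n₂ + n₃ : ℕ) : ℝ) / 2) / (Real.sqrt 3 * (4 * Real.pi * t)) *
        ∑ r₁ ∈ Finset.range (n₁ / 2 + 1), ∑ r₂ ∈ Finset.range (n₂ / 2 + 1),
          ∑ r₃ ∈ Finset.range (n₃ / 2 + 1),
          (((-1 : ℝ) ^ r₁ * (3 : ℝ) ^ ((r₁ : ℝ) - (n₁ : ℝ) / 2) *
              (Nat.factorial n₁) / ((Nat.factorial r₁) * (Nat.factorial (n₁ - 2 * r₁)))) *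
           ((-1 : ℝ) ^ r₂ * (3 : ℝ) ^ ((r₂ : ℝ) - (n₂ : ℝ) / 2) *
              (Nat.factorial n₂) / ((Nat.factorial r₂) * (Nat.factorial (n₂ - 2 * r₂)))) *
           ((-1 : ℝ) ^ r₃ * (3 : ℝ) ^ ((r₃ : ℝ) - (n₃ : ℝ) / 2) *
              (Nat.factorial n₃) / ((Nat.factorial r₃) * (Nat.factorial (n₃ - 2 * r₃)))) *
           (Nat.factorial ((n₁ + n₂ + n₃) - 2 * (r₁ + r₂ + r₃))) /
           (Nat.factorial ((n₁ + n₂ + n₃) / 2 - (r₁ + r₂ + r₃)))) := by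
  obtain ⟨M, hM⟩ : ∃ M, n₁ + n₂ + n₃ = 2 * M := h.exists_two_nsmul _
  have hconst : (√(4 * π * t))⁻¹ ^ 3 * √(2 * t) * √(π / (3 / 2)) = (√3 * (4 * π * t))⁻¹ := by
    rw [mul_assoc, ← sqrt_mul (by positivity : (0 : ℝ) ≤ 2 * t),
      show 2 * t * (π / (3 / 2)) = 4 * π * t / 3 by ring, sqrt_div' _ (by norm_num : (0 : ℝ) ≤ 3)]
    field_simp
    exact (sq_sqrt (by positivity)).symm
  calc
    _ = (√(4 * π * t))⁻¹ ^ 3 * √(2 * t) * ∫ y : ℝ, aeval y (hermite n₁) * aeval y (hermite n₂) *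
          aeval y (hermite n₃) * exp (-(3 / 2) * y ^ 2) :=
      integral_aeval_hermite_div_sqrt_mul_heatK_pow_three ht
    _ = (√3 * (4 * π * t))⁻¹ * ∑ r₁ ∈ range (n₁ / 2 + 1), ∑ r₂ ∈ range (n₂ / 2 + 1),
          ∑ r₃ ∈ range (n₃ / 2 + 1), hermiteCoeff n₁ r₁ * hermiteCoeff n₂ r₂ * hermiteCoeff n₃ r₃ *
            ((2 * (M - (r₁ + r₂ + r₃)) - 1)‼ / (3 : ℝ) ^ (M - (r₁ + r₂ + r₃))) := by
      rw [integral_aeval_hermite_mul_aeval_hermite_mul_aeval_hermite_mul_exp_neg_mul_sq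
        (by norm_num) hM, ← hconst]
      simp only [mul_sum]
      refine sum_congr rfl fun r₁ _ => sum_congr rfl fun r₂ _ => sum_congr rfl fun r₃ _ => ?_
      ring
    _ = _ := by
      simp only [mul_sum]
      refine sum_congr rfl fun r₁ hr₁ => sum_congr rfl fun r₂ hr₂ => sum_congr rfl fun r₃ hr₃ => ?_
      simp only [mem_range] at hr₁ hr₂ hr₃
      rw [hermiteCoeff_mul_mul_doubleFactorial_div_three_pow hM (by omega)]
      ring
end
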